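/- Let (q(t), p(t), S(t)) be a smooth curve in ℝ^d × ℝ^d × ℝ along which T := ∂H/∂S(q,p,S) ≠ 0 and K := −⟨F^fr(q, ∂H/∂p, S), ∂H/∂p⟩ ≠ 0 at every time. Then the curve satisfies the Hamiltonian-form equations q̇ = ∂H/∂p, ṗ = −∂H/∂q + F^fr(q, ∂H/∂p, S), (∂H/∂S)·Ṡ = −⟨F^fr(q, ∂H/∂p, S), ∂H/∂p⟩ if and only if for every smooth function F : ℝ^d × ℝ^d × ℝ → ℝ one has d/dt F(q(t),p(t),S(t)) = {F,H} + (F,H;S,H) along the curve, where (F,G;M,N) = (1/(T·K))·(⟨F^fr, ∂F/∂p⟩·∂G/∂S − ⟨F^fr, ∂G/∂p⟩·∂F/∂S)·(⟨F^fr, ∂M/∂p⟩·∂N/∂S − ⟨F^fr, ∂N/∂p⟩·∂M/∂S), with F^fr evaluated at (q, ∂H/∂p, S), and S in the brackets denotes the coordinate function (q,p,S) ↦ S. -/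

import Mathlib

open scoped RealInnerProductSpace

noncomputable section

/-- Partial gradient of `F (q, p, S)` in the first (position) variable. -/
def pdq {d : ℕ} (F : EuclideanSpace ℝ (Fin d) → EuclideanSpace ℝ (Fin d) → ℝ → ℝ)
    (q p : EuclideanSpace ℝ (Fin d)) (S : ℝ) : EuclideanSpace ℝ (Fin d) :=
  gradient (fun x => F x p S) q

/-- Partial gradient of `F (q, p, S)` in the second (momentum) variable. -/
def pdp {d : ℕ} (F : EuclideanSpace ℝ (Fin d) → EuclideanSpace ℝ (Fin d) → ℝ → ℝ)
    (q p : EuclideanSpace ℝ (Fin d)) (S : ℝ) : EuclideanSpace ℝ (Fin d) :=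
  gradient (fun y => F q y S) p

/-- Partial derivative of `F (q, p, S)` in the last (entropy) variable. -/
def pdS {d : ℕ} (F : EuclideanSpace ℝ (Fin d) → EuclideanSpace ℝ (Fin d) → ℝ → ℝ)
    (q p : EuclideanSpace ℝ (Fin d)) (S : ℝ) : ℝ :=
  deriv (fun s => F q p s) S

/-- The canonical Poisson bracket `{F, G} = ⟨∂F/∂q, ∂G/∂p⟩ − ⟨∂F/∂p, ∂G/∂q⟩`. -/
def poisson {d : ℕ} (F G : EuclideanSpace ℝ (Fin d) → EuclideanSpace ℝ (Fin d) → ℝ → ℝ)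
    (q p : EuclideanSpace ℝ (Fin d)) (S : ℝ) : ℝ :=
  ⟪pdq F q p S, pdp G q p S⟫ - ⟪pdp F q p S, pdq G q p S⟫

/-- The first metriplectic 4-bracket for a simple system, built from the friction
force `Ffr` (evaluated at `(q, ∂H/∂p, S)`), with `T = ∂H/∂S` and
`K = −⟨Ffr, ∂H/∂p⟩`. -/
def bracket4 {d : ℕ}
    (Ffr : EuclideanSpace ℝ (Fin d) → EuclideanSpace ℝ (Fin d) → ℝ → EuclideanSpace ℝ (Fin d))
    (H F G M N : EuclideanSpace ℝ (Fin d) → EuclideanSpace ℝ (Fin d) → ℝ → ℝ)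
    (q p : EuclideanSpace ℝ (Fin d)) (S : ℝ) : ℝ :=
  let f := Ffr q (pdp H q p S) S
  let T := pdS H q p S
  let K := -⟪f, pdp H q p S⟫
  (1 / (T * K)) *
    ((⟪f, pdp F q p S⟫ * pdS G q p S - ⟪f, pdp G q p S⟫ * pdS F q p S) *
      (⟪f, pdp M q p S⟫ * pdS N q p S - ⟪f, pdp N q p S⟫ * pdS M q p S))

section AuxLemmas

variable {d : ℕ}

local notation "E" => EuclideanSpace ℝ (Fin d)

lemma inner_gradient_eq (f : E → ℝ) (x u : E) :
    ⟪gradient f x, u⟫ = fderiv ℝ f x u :=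
  InnerProductSpace.toDual_symm_apply

lemma gradient_inner_right (v x : E) : gradient (fun y : E => ⟪v, y⟫) x = v := by
  have h : (fun y : E => ⟪v, y⟫) = ⇑(InnerProductSpace.toDual ℝ E v) := by
    funext y; rw [InnerProductSpace.toDual_apply_apply]
  rw [gradient, h, ContinuousLinearMap.fderiv, LinearIsometryEquiv.symm_apply_apply]

lemma chain (G : E → E → ℝ → ℝ)
    (hG : ContDiff ℝ (⊤ : ℕ∞) (fun x : E × E × ℝ => G x.1 x.2.1 x.2.2))
    (q p : ℝ → E) (S : ℝ → ℝ)
    (hq : ContDiff ℝ (⊤ : ℕ∞) q) (hp : ContDiff ℝ (⊤ : ℕ∞) p) (hS : ContDiff ℝ (⊤ : ℕ∞) S) (t : ℝ) :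
    HasDerivAt (fun τ => G (q τ) (p τ) (S τ))
      (⟪pdq G (q t) (p t) (S t), deriv q t⟫ + ⟪pdp G (q t) (p t) (S t), deriv p t⟫
        + pdS G (q t) (p t) (S t) * deriv S t) t := by
  set a := q t with ha
  set b := p t with hb
  set s := S t with hs
  have hGd : DifferentiableAt ℝ (fun x : E × E × ℝ => G x.1 x.2.1 x.2.2) (a, b, s) :=
    (hG.differentiable (by simp)).differentiableAt
  set D := fderiv ℝ (fun x : E × E × ℝ => G x.1 x.2.1 x.2.2) (a, b, s) with hD
  have hc : HasDerivAt (fun τ => (q τ, p τ, S τ)) (deriv q t, deriv p t, deriv S t) t :=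
    ((hq.differentiable (by simp) t).hasDerivAt).prodMk
      (((hp.differentiable (by simp) t).hasDerivAt).prodMk ((hS.differentiable (by simp) t).hasDerivAt))
  have hcomp : HasDerivAt (fun τ => G (q τ) (p τ) (S τ))
      (D (deriv q t, deriv p t, deriv S t)) t :=
    by have := hGd.hasFDerivAt.comp_hasDerivAt t hc; exact this
  have hpdq : ∀ u : E, ⟪pdq G a b s, u⟫ = D (u, 0, 0) := by
    intro u
    have h1 : HasFDerivAt (fun x : E => G x b s)
        (D.comp (ContinuousLinearMap.inl ℝ E (E × ℝ))) a :=
      by have := hGd.hasFDerivAt.comp a (hasFDerivAt_prodMk_left (𝕜 := ℝ) a (b, s)); exact this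
    rw [pdq, inner_gradient_eq, h1.fderiv]
    rfl
  have hpdp : ∀ v : E, ⟪pdp G a b s, v⟫ = D (0, v, 0) := by
    intro v
    have h2 : HasFDerivAt (fun y : E => ((a, y, s) : E × E × ℝ))
        ((0 : E →L[ℝ] E).prod ((ContinuousLinearMap.id ℝ E).prod 0)) b :=
      (hasFDerivAt_const a b).prodMk ((hasFDerivAt_id b).prodMk (hasFDerivAt_const s b))
    have h2' : HasFDerivAt (fun y : E => G a y s)
        (D.comp ((0 : E →L[ℝ] E).prod ((ContinuousLinearMap.id ℝ E).prod 0))) b :=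
      by have := hGd.hasFDerivAt.comp b h2; exact this
    rw [pdp, inner_gradient_eq, h2'.fderiv]
    rfl
  have hpdS : pdS G a b s = D (0, 0, 1) := by
    have h3 : HasDerivAt (fun w : ℝ => ((a, b, w) : E × E × ℝ)) ((0 : E), (0 : E), (1 : ℝ)) s :=
      (hasDerivAt_const s a).prodMk ((hasDerivAt_const s b).prodMk (hasDerivAt_id s))
    have h3' : HasDerivAt (fun w : ℝ => G a b w) (D ((0 : E), (0 : E), (1 : ℝ))) s :=
      by have := hGd.hasFDerivAt.comp_hasDerivAt s h3; exact this
    rw [pdS, h3'.deriv]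
  have key : D (deriv q t, deriv p t, deriv S t)
      = ⟪pdq G a b s, deriv q t⟫ + ⟪pdp G a b s, deriv p t⟫ + pdS G a b s * deriv S t := by
    have hsplit : ((deriv q t, deriv p t, deriv S t) : E × E × ℝ)
        = ((deriv q t, 0, 0) : E × E × ℝ) + ((0, deriv p t, 0) : E × E × ℝ)
          + ((0, 0, deriv S t) : E × E × ℝ) := by
      simp [Prod.ext_iff]
    have hsm : ((0, 0, deriv S t) : E × E × ℝ) = deriv S t • ((0, 0, 1) : E × E × ℝ) := by
      simp [Prod.ext_iff]
    rw [hsplit, map_add, map_add, hsm, map_smul, hpdq, hpdp, hpdS]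
    simp [smul_eq_mul, mul_comm]
  rw [← key]
  exact hcomp

-- test function: ⟪v, q⟫
lemma pdq_cq (v a b : E) (s : ℝ) : pdq (fun x _ _ => ⟪v, x⟫) a b s = v :=
  gradient_inner_right v a

lemma pdp_cq (v a b : E) (s : ℝ) : pdp (fun x _ _ => ⟪v, x⟫) a b s = 0 := by
  simp [pdp, gradient_const]

lemma pdS_cq (v a b : E) (s : ℝ) : pdS (fun x _ _ => ⟪v, x⟫) a b s = 0 := by
  simp [pdS]

-- test function: ⟪v, p⟫
lemma pdq_cp (v a b : E) (s : ℝ) : pdq (fun _ y _ => ⟪v, y⟫) a b s = 0 := by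
  simp [pdq, gradient_const]

lemma pdp_cp (v a b : E) (s : ℝ) : pdp (fun _ y _ => ⟪v, y⟫) a b s = v :=
  gradient_inner_right v b

lemma pdS_cp (v a b : E) (s : ℝ) : pdS (fun _ y _ => ⟪v, y⟫) a b s = 0 := by
  simp [pdS]

-- test function: S
lemma pdq_cS (a b : E) (s : ℝ) : pdq (fun _ _ w => w) a b s = 0 := by
  simp [pdq, gradient_const]

lemma pdp_cS (a b : E) (s : ℝ) : pdp (fun _ _ w => w) a b s = 0 := by
  simp [pdp, gradient_const]

lemma pdS_cS (a b : E) (s : ℝ) : pdS (fun _ _ w => w) a b s = 1 := by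
  simp [pdS]

end AuxLemmas

/-- A curve satisfies the Hamiltonian-form equations of a simple thermodynamic
system iff every smooth observable evolves by the Poisson bracket plus the first
metriplectic 4-bracket, `Ḟ = {F,H} + (F,H;S,H)`. -/
theorem simple_system_first_metriplectic {d : ℕ}
    (H : EuclideanSpace ℝ (Fin d) → EuclideanSpace ℝ (Fin d) → ℝ → ℝ)
    (Ffr : EuclideanSpace ℝ (Fin d) → EuclideanSpace ℝ (Fin d) → ℝ → EuclideanSpace ℝ (Fin d))
    (hH : ContDiff ℝ (⊤ : ℕ∞) (fun x : EuclideanSpace ℝ (Fin d) × EuclideanSpace ℝ (Fin d) × ℝ =>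
      H x.1 x.2.1 x.2.2))
    (q p : ℝ → EuclideanSpace ℝ (Fin d)) (S : ℝ → ℝ)
    (hq : ContDiff ℝ (⊤ : ℕ∞) q) (hp : ContDiff ℝ (⊤ : ℕ∞) p) (hS : ContDiff ℝ (⊤ : ℕ∞) S)
    (hT : ∀ t : ℝ, pdS H (q t) (p t) (S t) ≠ 0)
    (hK : ∀ t : ℝ,
      -⟪Ffr (q t) (pdp H (q t) (p t) (S t)) (S t), pdp H (q t) (p t) (S t)⟫ ≠ 0) :
    (∀ t : ℝ,
        deriv q t = pdp H (q t) (p t) (S t)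
        ∧ deriv p t = - pdq H (q t) (p t) (S t)
            + Ffr (q t) (pdp H (q t) (p t) (S t)) (S t)
        ∧ pdS H (q t) (p t) (S t) * deriv S t
            = - ⟪Ffr (q t) (pdp H (q t) (p t) (S t)) (S t), pdp H (q t) (p t) (S t)⟫)
    ↔ (∀ F : EuclideanSpace ℝ (Fin d) → EuclideanSpace ℝ (Fin d) → ℝ → ℝ,
        ContDiff ℝ (⊤ : ℕ∞) (fun x : EuclideanSpace ℝ (Fin d) × EuclideanSpace ℝ (Fin d) × ℝ =>
          F x.1 x.2.1 x.2.2) →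
        ∀ t : ℝ,
          deriv (fun τ => F (q τ) (p τ) (S τ)) t
            = poisson F H (q t) (p t) (S t)
              + bracket4 Ffr H F H (fun _ _ s => s) H (q t) (p t) (S t)) := by
  constructor
  · -- forward direction
    intro h F hF t
    obtain ⟨h1, h2, h3⟩ := h t
    have hch := (chain F hF q p S hq hp hS t).deriv
    rw [hch, h1, h2]
    have hk := hK t
    have hT' := hT t
    have hS' : deriv S t
        = (-⟪Ffr (q t) (pdp H (q t) (p t) (S t)) (S t), pdp H (q t) (p t) (S t)⟫)
            / pdS H (q t) (p t) (S t) := by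
      rw [eq_div_iff hT']; linarith [h3]
    rw [hS']
    simp only [poisson, bracket4, pdp_cS, pdS_cS, inner_zero_right, inner_add_right,
      inner_neg_right]
    rw [real_inner_comm (pdp F (q t) (p t) (S t)) (Ffr (q t) (pdp H (q t) (p t) (S t)) (S t))]
    set k := (⟪Ffr (q t) (pdp H (q t) (p t) (S t)) (S t), pdp H (q t) (p t) (S t)⟫ : ℝ) with hkd
    set T := pdS H (q t) (p t) (S t) with hTd
    set SF := pdS F (q t) (p t) (S t) with hSFd
    set A := (⟪pdq F (q t) (p t) (S t), pdp H (q t) (p t) (S t)⟫ : ℝ) with hAd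
    set B := (⟪pdp F (q t) (p t) (S t), pdq H (q t) (p t) (S t)⟫ : ℝ) with hBd
    set C := (⟪pdp F (q t) (p t) (S t), Ffr (q t) (pdp H (q t) (p t) (S t)) (S t)⟫ : ℝ) with hCd
    have hk' : k ≠ 0 := fun h0 => hk (by rw [h0]; ring)
    field_simp
    ring
  · -- reverse direction
    intro h t
    have hk := hK t
    have hT' := hT t
    have hkk : ⟪Ffr (q t) (pdp H (q t) (p t) (S t)) (S t), pdp H (q t) (p t) (S t)⟫ ≠ 0 := by
      intro h0; exact hk (by rw [h0]; ring)
    refine ⟨?_, ?_, ?_⟩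
    · -- q̇ = ∂H/∂p
      apply ext_inner_left ℝ
      intro v
      have hsm : ContDiff ℝ (⊤ : ℕ∞) (fun x : EuclideanSpace ℝ (Fin d) × EuclideanSpace ℝ (Fin d) × ℝ =>
          ⟪v, x.1⟫) := ContDiff.inner ℝ contDiff_const contDiff_fst
      have hch := (chain (fun x _ _ => ⟪v, x⟫) hsm q p S hq hp hS t).deriv
      have hh := h (fun x _ _ => ⟪v, x⟫) hsm t
      rw [hch] at hh
      simp only [poisson, bracket4, pdq_cq, pdp_cq, pdS_cq, pdp_cS, pdS_cS,
        inner_zero_right, inner_zero_left] at hh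
      simpa using hh
    · -- ṗ = -∂H/∂q + Ffr
      apply ext_inner_left ℝ
      intro v
      have hsm : ContDiff ℝ (⊤ : ℕ∞) (fun x : EuclideanSpace ℝ (Fin d) × EuclideanSpace ℝ (Fin d) × ℝ =>
          ⟪v, x.2.1⟫) := ContDiff.inner ℝ contDiff_const (contDiff_fst.comp contDiff_snd)
      have hch := (chain (fun _ y _ => ⟪v, y⟫) hsm q p S hq hp hS t).deriv
      have hh := h (fun _ y _ => ⟪v, y⟫) hsm t
      rw [hch] at hh
      simp only [poisson, bracket4, pdq_cp, pdp_cp, pdS_cp, pdp_cS, pdS_cS,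
        inner_zero_right, inner_zero_left] at hh
      rw [inner_add_right, inner_neg_right]
      rw [real_inner_comm v (Ffr (q t) (pdp H (q t) (p t) (S t)) (S t))] at hh
      set k := (⟪Ffr (q t) (pdp H (q t) (p t) (S t)) (S t), pdp H (q t) (p t) (S t)⟫ : ℝ) with hkd
      set T := pdS H (q t) (p t) (S t) with hTd
      set x := (⟪v, Ffr (q t) (pdp H (q t) (p t) (S t)) (S t)⟫ : ℝ) with hxd
      have hk' : k ≠ 0 := fun h0 => hk (by rw [h0]; ring)
      have e : 1 / (T * -k) * ((x * T - k * 0) * (0 * T - k * 1)) = x := by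
        field_simp
        ring
      rw [e] at hh
      linarith [hh]
    · -- T Ṡ = -K
      have hsm : ContDiff ℝ (⊤ : ℕ∞) (fun x : EuclideanSpace ℝ (Fin d) × EuclideanSpace ℝ (Fin d) × ℝ =>
          x.2.2) := contDiff_snd.comp contDiff_snd
      have hh := h (fun _ _ w => w) hsm t
      have hDS : deriv (fun τ => S τ) t = deriv S t := rfl
      rw [hDS] at hh
      simp only [poisson, bracket4, pdq_cS, pdp_cS, pdS_cS, inner_zero_right,
        inner_zero_left] at hh
      set k := (⟪Ffr (q t) (pdp H (q t) (p t) (S t)) (S t), pdp H (q t) (p t) (S t)⟫ : ℝ) with hkd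
      set T := pdS H (q t) (p t) (S t) with hTd
      have hk' : k ≠ 0 := fun h0 => hk (by rw [h0]; ring)
      have e : 1 / (T * -k) * ((0 * T - k * 1) * (0 * T - k * 1)) = -k / T := by
        field_simp
        ring
      rw [e] at hh
      rw [hh]
      field_simp
      ring

end
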